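/- For every player p, every history h, every randomised move α of player p at last(h), and every semantics ⋆ ∈ {S, A}: α is ⋆-admissible at h (⋆-LA at h) if and only if for every a ∈ Supp(α): (1) the Dirac move a is ⋆-admissible at h, and (2) a ≈^⋆_h b for every b ∈ Supp(α). -/

import Mathlib

open scoped Classical

noncomputable section

/-- Run of a deterministic automaton along an infinite word. -/
def autRun {α Q : Type} (q0 : Q) (d : Q → α → Q) (ρ : ℕ → α) : ℕ → Q
  | 0 => q0
  | k + 1 => d (autRun q0 d ρ k) (ρ k)

/-- A concurrent game played on a finite graph. -/
structure ConcGame where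
  S : Type
  A : Type
  P : Type
  [fS : Fintype S]
  [fA : Fintype A]
  [fP : Fintype P]
  [dS : DecidableEq S]
  [dA : DecidableEq A]
  [dP : DecidableEq P]
  init : S
  act : P → S → Set A
  act_nonempty : ∀ p s, (act p s).Nonempty
  tr : S → (P → A) → S

open MeasureTheory

namespace ConcGame

attribute [instance] ConcGame.fS ConcGame.fA ConcGame.fP ConcGame.dS ConcGame.dA ConcGame.dP

inductive Sem where
  | Sure : Sem
  | Almost : Sem

variable (G : ConcGame)

instance : MeasurableSpace G.S := ⊤

/-- Randomised move of player `p` at state `s`: a probability distribution on `act p s`. -/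
def Mixed (p : G.P) (s : G.S) : Type :=
  { f : G.A → ℝ // (∀ a, 0 ≤ f a) ∧ (∑ a, f a) = 1 ∧ ∀ a, f a ≠ 0 → a ∈ G.act p s }

/-- Support of a randomised move. -/
def Supp {p : G.P} {s : G.S} (α : G.Mixed p s) : Set G.A := { a | α.1 a ≠ 0 }

/-- A randomised move is Dirac if it puts all mass on one action. -/
def IsDirac {p : G.P} {s : G.S} (α : G.Mixed p s) : Prop := ∃ a, α.1 a = 1

/-- The Dirac move on action `a`. -/
def dirac (p : G.P) (s : G.S) (a : G.A) (ha : a ∈ G.act p s) : G.Mixed p s :=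
  ⟨fun b => if b = a then 1 else 0, by
    refine ⟨fun b => ?_, ?_, fun b hb => ?_⟩
    · by_cases h : b = a <;> simp [h]
    · simp
    · by_cases h : b = a
      · subst h; exact ha
      · simp [h] at hb⟩

/-- The last state of a history (the initial state for the empty list). -/
def lastS (l : List G.S) : G.S := l.getLast?.getD G.init

/-- One step of the game graph. -/
def Step (s s' : G.S) : Prop :=
  ∃ m : G.P → G.A, (∀ p, m p ∈ G.act p s) ∧ G.tr s m = s'

/-- Histories: finite paths starting at the initial state. -/
def IsHistory (l : List G.S) : Prop := l.head? = some G.init ∧ l.Chain' G.Step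

/-- Runs: infinite sequences of states. -/
abbrev Run : Type := ℕ → G.S

/-- A strategy of player `p`: maps each history to a randomised move at its last state. -/
def Strategy (p : G.P) : Type := (l : List G.S) → G.Mixed p (G.lastS l)

/-- A profile of strategies, one per player. -/
def Profile : Type := ∀ p : G.P, G.Strategy p

/-- A strategy for the coalition `-p` of all players other than `p`. -/
def CoStrategy (p : G.P) : Type := ∀ q : G.P, q ≠ p → G.Strategy q

/-- Combining a strategy of `p` with a coalition strategy of `-p` into a profile. -/
def combine {p : G.P} (σ : G.Strategy p) (τ : G.CoStrategy p) : G.Profile :=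
  fun q => if h : q = p then (by subst h; exact σ) else τ q h

/-- One-step transition probability when each player independently samples its move. -/
def stepProb (s : G.S) (β : G.P → G.A → ℝ) (s' : G.S) : ℝ :=
  ∑ m ∈ Finset.univ.filter (fun m : G.P → G.A => G.tr s m = s'), ∏ p, β p (m p)

/-- Probability of the cylinder of a history under a profile. -/
def cylProb (σv : G.Profile) (l : List G.S) : ℝ :=
  ∏ i ∈ Finset.range (l.length - 1),
    G.stepProb (G.lastS (l.take (i + 1))) (fun p => (σv p (l.take (i + 1))).1)
      (G.lastS (l.take (i + 2)))

/-- The cylinder of a finite word: runs having it as a prefix. -/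
def Cyl (l : List G.S) : Set G.Run := { ρ | ∀ i, i < l.length → ρ i = l.getD i G.init }

/-- Histories with positive probability under a profile. -/
def HistOf (σv : G.Profile) : Set (List G.S) :=
  { l | G.IsHistory l ∧ 0 < G.cylProb σv l }

/-- The prefix of length `k+1` of a run. -/
def prefixList (ρ : G.Run) (k : ℕ) : List G.S := (List.range (k + 1)).map ρ

/-- Outcome of a profile: runs all of whose prefixes have positive probability. -/
def Outcome (σv : G.Profile) : Set G.Run := { ρ | ∀ k, G.prefixList ρ k ∈ G.HistOf σv }

/-- Histories compatible with a single strategy of player `p`. -/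
def HistOfS {p : G.P} (σ : G.Strategy p) : Set (List G.S) :=
  ⋃ τ : G.CoStrategy p, G.HistOf (G.combine σ τ)

/-- `Pr` assigns to every profile a probability measure on runs which agrees with the
    inductively defined cylinder probabilities. -/
def ValidPr (Pr : G.Profile → Measure G.Run) : Prop :=
  (∀ σv, IsProbabilityMeasure (Pr σv)) ∧
    ∀ σv l, G.IsHistory l → Pr σv (G.Cyl l) = ENNReal.ofReal (G.cylProb σv l)

/-- A profile wins a condition under the sure / almost-sure semantics. -/
def Wins (Pr : G.Profile → Measure G.Run) : Sem → G.Profile → Set G.Run → Prop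
  | Sem.Sure, σv, Φ => G.Outcome σv ⊆ Φ
  | Sem.Almost, σv, Φ => Pr σv Φ = 1

/-- A profile wins a condition from a given history, under each semantics. -/
def WinsFrom (Pr : G.Profile → Measure G.Run) : Sem → G.Profile → Set G.Run → List G.S → Prop
  | Sem.Sure, σv, Φ, l => G.Outcome σv ∩ G.Cyl l ⊆ Φ
  | Sem.Almost, σv, Φ, l => l ∈ G.HistOf σv ∧ Pr σv (Φ ∩ G.Cyl l) / Pr σv (G.Cyl l) = 1

/-- A strategy of `p` is winning if it wins against every coalition strategy. -/
def StratWins (Pr : G.Profile → Measure G.Run) (st : Sem) {p : G.P} (σ : G.Strategy p)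
    (Φ : Set G.Run) : Prop :=
  ∀ τ : G.CoStrategy p, G.Wins Pr st (G.combine σ τ) Φ

/-- A strategy of `p` is winning from a history `l`. -/
def StratWinsFrom (Pr : G.Profile → Measure G.Run) (st : Sem) {p : G.P} (σ : G.Strategy p)
    (Φ : Set G.Run) (l : List G.S) : Prop :=
  ∀ τ : G.CoStrategy p, G.WinsFrom Pr st (G.combine σ τ) Φ l

/-- Weak dominance between strategies of player `p`. -/
def WDom (Pr : G.Profile → Measure G.Run) (win : G.P → Set G.Run) (st : Sem) {p : G.P}
    (σ σ' : G.Strategy p) : Prop :=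
  ∀ τ : G.CoStrategy p,
    G.Wins Pr st (G.combine σ τ) (win p) → G.Wins Pr st (G.combine σ' τ) (win p)

/-- Strict dominance between strategies. -/
def SDom (Pr : G.Profile → Measure G.Run) (win : G.P → Set G.Run) (st : Sem) {p : G.P}
    (σ σ' : G.Strategy p) : Prop :=
  G.WDom Pr win st σ σ' ∧ ¬ G.WDom Pr win st σ' σ

/-- Equivalence of strategies. -/
def EquivS (Pr : G.Profile → Measure G.Run) (win : G.P → Set G.Run) (st : Sem) {p : G.P}
    (σ σ' : G.Strategy p) : Prop :=
  G.WDom Pr win st σ σ' ∧ G.WDom Pr win st σ' σ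

/-- A strategy is admissible iff it is not dominated. -/
def Admissible (Pr : G.Profile → Measure G.Run) (win : G.P → Set G.Run) (st : Sem) {p : G.P}
    (σ : G.Strategy p) : Prop :=
  ∀ σ' : G.Strategy p, ¬ G.SDom Pr win st σ σ'

/-- Weak dominance between randomised moves at a history. -/
def MWDom (Pr : G.Profile → Measure G.Run) (win : G.P → Set G.Run) (st : Sem) {p : G.P}
    (l : List G.S) (α α' : G.Mixed p (G.lastS l)) : Prop :=
  ∀ σ : G.Strategy p, l ∈ G.HistOfS σ → σ l = α →
    ∃ σ' : G.Strategy p, σ' l = α' ∧ G.WDom Pr win st σ σ'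

/-- Equivalence of moves at a history. -/
def MEquiv (Pr : G.Profile → Measure G.Run) (win : G.P → Set G.Run) (st : Sem) {p : G.P}
    (l : List G.S) (α α' : G.Mixed p (G.lastS l)) : Prop :=
  G.MWDom Pr win st l α α' ∧ G.MWDom Pr win st l α' α

/-- Strict dominance between moves at a history. -/
def MSDom (Pr : G.Profile → Measure G.Run) (win : G.P → Set G.Run) (st : Sem) {p : G.P}
    (l : List G.S) (α α' : G.Mixed p (G.lastS l)) : Prop :=
  G.MWDom Pr win st l α α' ∧ ¬ G.MWDom Pr win st l α' α

/-- A move is admissible at a history iff no move dominates it there. -/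
def MAdmissible (Pr : G.Profile → Measure G.Run) (win : G.P → Set G.Run) (st : Sem) {p : G.P}
    (l : List G.S) (α : G.Mixed p (G.lastS l)) : Prop :=
  ∀ α' : G.Mixed p (G.lastS l), ¬ G.MSDom Pr win st l α α'

/-- A strategy is locally admissible (LA) iff it plays admissible moves at every history. -/
def LA (Pr : G.Profile → Measure G.Run) (win : G.P → Set G.Run) (st : Sem) {p : G.P}
    (σ : G.Strategy p) : Prop :=
  ∀ l, G.IsHistory l → G.MAdmissible Pr win st l (σ l)

/-- The value of a history w.r.t. a strategy: 1 if winning from it, 0 if the coalition can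
    both let the strategy win and make it lose, -1 otherwise. -/
def ValStrat (Pr : G.Profile → Measure G.Run) (win : G.P → Set G.Run) (st : Sem) {p : G.P}
    (l : List G.S) (σ : G.Strategy p) : ℤ :=
  if G.StratWinsFrom Pr st σ (win p) l then 1
  else if (∃ τ : G.CoStrategy p, G.WinsFrom Pr st (G.combine σ τ) (win p) l) then 0
  else -1

/-- The value of a history for player `p`: the best value over the player's strategies. -/
def ValH (Pr : G.Profile → Measure G.Run) (win : G.P → Set G.Run) (st : Sem) (p : G.P)
    (l : List G.S) : ℤ :=
  if (∃ σ : G.Strategy p, G.ValStrat Pr win st l σ = 1) then 1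
  else if (∃ σ : G.Strategy p, G.ValStrat Pr win st l σ = 0) then 0
  else -1

/-- Strongly cooperative optimal strategies. -/
def SCO (Pr : G.Profile → Measure G.Run) (win : G.P → Set G.Run) (st : Sem) {p : G.P}
    (σ : G.Strategy p) : Prop :=
  ∀ l ∈ G.HistOfS σ, G.ValStrat Pr win st l σ = G.ValH Pr win st p l

/-- The full action tuple obtained from `a` for `p` and `c` for the coalition. -/
def combAct {p : G.P} (a : G.A) (c : ∀ q : G.P, q ≠ p → G.A) : G.P → G.A :=
  fun q => if h : q = p then (by subst h; exact a) else c q h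

/-- The tuple of one-step distributions obtained from a move of `p` and coalition moves. -/
def combMix {p : G.P} {s : G.S} (α : G.Mixed p s) (γ : ∀ q : G.P, q ≠ p → G.Mixed q s) :
    G.P → G.A → ℝ :=
  fun q => if h : q = p then (by subst h; exact α.1) else (γ q h).1

/-- Simple safety games: each player loses exactly the runs visiting its bad states, and
    bad states are closed under steps. -/
def SimpleSafety (win : G.P → Set G.Run) : Prop :=
  ∃ Bad : G.P → Set G.S,
    (∀ p, win p = { ρ : G.Run | ∀ i, ρ i ∉ Bad p }) ∧
    ∀ p s, s ∈ Bad p → ∀ s', G.Step s s' → s' ∈ Bad p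

/-- Prefix-independent winning conditions. -/
def PrefIndep (Φ : Set G.Run) : Prop :=
  ∀ (ρ : G.Run) (k : ℕ), ρ ∈ Φ ↔ (fun i => ρ (i + k)) ∈ Φ

/-- `stf` and `plf` give the unique state and player where each action is available. -/
def UniqueAvail (stf : G.A → G.S) (plf : G.A → G.P) : Prop :=
  ∀ (q : G.P) (s : G.S) (a : G.A), a ∈ G.act q s → plf a = q ∧ stf a = s

/-- An action of player `q` is ⋆-LA if its Dirac move is admissible at every history where
    it is available. -/
def LAAct (Pr : G.Profile → Measure G.Run) (win : G.P → Set G.Run) (st : Sem)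
    (q : G.P) (a : G.A) : Prop :=
  ∀ (l : List G.S) (_ : G.IsHistory l) (ha : a ∈ G.act q (G.lastS l)),
    G.MAdmissible Pr win st l (G.dirac q (G.lastS l) a ha)

/-- Current `S`-component of a history of the derived game. -/
def dCur (l : List (G.S × (G.P → G.A))) : G.S := (l.getLast?.map Prod.fst).getD G.init

/-- Legal joint action in the derived game: available and ⋆-LA for every player. -/
def DLegal (Pr : G.Profile → Measure G.Run) (win : G.P → Set G.Run) (st : Sem)
    (s : G.S) (m : G.P → G.A) : Prop :=
  ∀ q, m q ∈ G.act q s ∧ G.LAAct Pr win st q (m q)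

/-- Histories of the derived game `G⋆_p` (the part after the initial state). -/
def IsDHistory (Pr : G.Profile → Measure G.Run) (win : G.P → Set G.Run) (st : Sem)
    (l : List (G.S × (G.P → G.A))) : Prop :=
  ∀ i (hi : i < l.length),
    G.DLegal Pr win st (G.dCur (l.take i)) (l.get ⟨i, hi⟩).2 ∧
    (l.get ⟨i, hi⟩).1 = G.tr (G.dCur (l.take i)) (l.get ⟨i, hi⟩).2

/-- Observation of a derived history: the projection to states. -/
def oHist (l : List (G.S × (G.P → G.A))) : List G.S := G.init :: l.map Prod.fst

/-- Observation-based Dirac strategies of player `p` in the derived game. -/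
def IsDStrategy (Pr : G.Profile → Measure G.Run) (win : G.P → Set G.Run) (st : Sem)
    (p : G.P) (σb : List (G.S × (G.P → G.A)) → G.A) : Prop :=
  (∀ l, G.IsDHistory Pr win st l → σb l ∈ G.act p (G.dCur l) ∧ G.LAAct Pr win st p (σb l)) ∧
  (∀ l l', G.oHist l = G.oHist l' → σb l = σb l')

/-- `σb` is a realisation of the strategy `σ` in the derived game. -/
def IsRealisation (Pr : G.Profile → Measure G.Run) (win : G.P → Set G.Run) (st : Sem)
    (p : G.P) (σ : G.Strategy p) (σb : List (G.S × (G.P → G.A)) → G.A) : Prop :=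
  G.IsDStrategy Pr win st p σb ∧
  ∀ l, G.IsDHistory Pr win st l → σb l ∈ G.Supp (σ (G.oHist l))

/-- The prefix of length `k` of a derived run. -/
def dPrefix (ρb : ℕ → G.S × (G.P → G.A)) (k : ℕ) : List (G.S × (G.P → G.A)) :=
  (List.range k).map ρb

/-- Outcome of a player-`p` strategy in the derived game: all derived runs consistent with
    it in which all players play legal ⋆-LA Dirac actions. -/
def DOutcome (Pr : G.Profile → Measure G.Run) (win : G.P → Set G.Run) (st : Sem)
    (p : G.P) (σb : List (G.S × (G.P → G.A)) → G.A) : Set (ℕ → G.S × (G.P → G.A)) :=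
  { ρb | ∀ k,
      G.DLegal Pr win st (G.dCur (G.dPrefix ρb k)) (ρb k).2 ∧
      (ρb k).2 p = σb (G.dPrefix ρb k) ∧
      (ρb k).1 = G.tr (G.dCur (G.dPrefix ρb k)) (ρb k).2 }

/-- Observation of a derived run: the induced run of `G`. -/
def oRun (ρb : ℕ → G.S × (G.P → G.A)) : G.Run :=
  fun k => match k with
  | 0 => G.init
  | Nat.succ n => (ρb n).1

/-- Value of a state for player `q` (well defined for prefix-independent conditions). -/
def ValSt (Pr : G.Profile → Measure G.Run) (win : G.P → Set G.Run) (st : Sem)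
    (q : G.P) (s : G.S) : ℤ :=
  if (∃ l, G.IsHistory l ∧ G.lastS l = s ∧ G.ValH Pr win st q l = 1) then 1
  else if (∃ l, G.IsHistory l ∧ G.lastS l = s ∧ G.ValH Pr win st q l = 0) then 0
  else -1

/-- States of the derived game where player `q` has value 0 but another choice of the
    coalition could have helped `q`. -/
def Help (Pr : G.Profile → Measure G.Run) (win : G.P → Set G.Run) (st : Sem)
    (stf : G.A → G.S) (q : G.P) : Set (G.S × (G.P → G.A)) :=
  { x | G.ValSt Pr win st q x.1 = 0 ∧
      ∃ c : ∀ r : G.P, r ≠ q → G.A, (∀ r hr, c r hr ∈ G.act r (stf (x.2 q))) ∧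
        0 ≤ G.ValSt Pr win st q (G.tr (stf (x.2 q)) (G.combAct (x.2 q) c)) ∧
        G.tr (stf (x.2 q)) (G.combAct (x.2 q) c) ≠ x.1 }

/-- The formula φ⁰_q evaluated on a derived run. -/
def phi0 (Pr : G.Profile → Measure G.Run) (win : G.P → Set G.Run) (st : Sem)
    (stf : G.A → G.S) (q : G.P) (ρb : ℕ → G.S × (G.P → G.A)) : Prop :=
  (∃ k, G.ValSt Pr win st q (G.oRun ρb k) ≠ 0) ∨
  (G.oRun ρb ∈ win q) ∨
  (∀ k, ∃ j, k ≤ j ∧ ρb j ∈ G.Help Pr win st stf q)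

/-- The formula φ¹_q evaluated on a derived run. -/
def phi1 (Pr : G.Profile → Measure G.Run) (win : G.P → Set G.Run) (st : Sem)
    (q : G.P) (ρb : ℕ → G.S × (G.P → G.A)) : Prop :=
  (∃ k, G.ValSt Pr win st q (G.oRun ρb k) = 1) → G.oRun ρb ∈ win q

/-- ω-regular sets of runs: recognised by a deterministic finite parity automaton. -/
def IsOmegaRegular (Φ : Set G.Run) : Prop :=
  ∃ (Q : Type) (_ : Fintype Q) (q0 : Q) (d : Q → G.S → Q) (c : Q → ℕ),
    Φ = { ρ : G.Run | ∃ n, Even n ∧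
      Set.Infinite { k | c (autRun q0 d ρ k) = n } ∧
      ∀ m, Set.Infinite { k | c (autRun q0 d ρ k) = m } → n ≤ m }

/-- Finite-memory strategies: realised by a finite stochastic Moore machine. -/
def FiniteMemory {p : G.P} (σ : G.Strategy p) : Prop :=
  ∃ (M : Type) (_ : Fintype M) (m0 : M) (upd : M → G.S → M)
    (out : M → (s : G.S) → G.Mixed p s),
    ∀ l : List G.S, σ l = out (l.foldl upd m0) (G.lastS l)

end ConcGame

/-!
The law of a profile is determined by the probabilities of cylinders, so winning from a history
`l` splits into winning on the runs avoiding `l` and winning below each successor `l ++ [s]`; the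
move at `l` only matters through the successors it reaches. Hence a strategy wins against `τ`
iff each of its Dirac modifications at `l` on an action of its support does, so shrinking the
support of a move dominates it. Changing a strategy at a history it cannot reach changes nothing,
which makes dominance of moves transitive.

Conversely, suppose `σ` is dominated by strategies `σa` playing the Dirac move `a` at `l`, for
every `a ∈ Supp γ`. Either the coalition can keep some `σa` away from `l` whenever `σ` wins, and
then `σa` with `γ` at `l` dominates `σ`; or every successor reached by `γ` but not by `σ l` is
one from which `p` has a winning strategy, since the coalition can make it unreachable for `σ`
yet reachable for the `σa` that leads there. Playing `γ` at `l`, these winning strategies below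
such successors, and `σ` elsewhere then dominates `σ`. Both directions of the theorem follow by
composing these dominances.
-/

lemma sum_ofFn_eq_sum_singleton {α M : Type*} [Fintype α] [AddCommMonoid M] (g : List α → M)
    (hg : ∀ L ≠ [], ∑ s, g (L ++ [s]) = g L) (n : ℕ) :
    ∑ f : Fin (n + 1) → α, g (List.ofFn f) = ∑ x, g [x] := by
  induction n with
  | zero =>
    rw [← (Equiv.funUnique (Fin 1) α).symm.sum_comp]
    simp [List.ofFn_succ]
  | succ n ih =>
    rw [← (Fin.snocEquiv fun _ => α).sum_comp, Fintype.sum_prod_type_right, ← ih]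
    refine Finset.sum_congr rfl fun f _ => ?_
    convert hg (List.ofFn f) (by simp) using 2 with x
    rw [List.ofFn_succ']
    simp [Fin.snocEquiv]

namespace ConcGame

variable {G : ConcGame}

/-! ### Cylinders -/

@[simp] lemma lastS_append_singleton (L : List G.S) (s : G.S) : G.lastS (L ++ [s]) = s := by
  simp [lastS]

@[simp] lemma Cyl_nil : G.Cyl [] = Set.univ := by
  ext ρ
  simp [Cyl]

@[simp] lemma length_prefixList (ρ : G.Run) (k : ℕ) : (G.prefixList ρ k).length = k + 1 := by
  simp [prefixList]

lemma prefixList_getD (ρ : G.Run) {k i : ℕ} (hi : i ≤ k) :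
    (G.prefixList ρ k).getD i G.init = ρ i := by
  simp [prefixList, List.getD_eq_getElem?_getD, List.getElem?_range (show i < k + 1 by omega)]

lemma mem_Cyl_prefixList (ρ : G.Run) (k : ℕ) : ρ ∈ G.Cyl (G.prefixList ρ k) := fun i hi =>
  (prefixList_getD ρ (by simp at hi; omega)).symm

lemma prefixList_prefix (ρ : G.Run) {i k : ℕ} (h : i ≤ k) :
    G.prefixList ρ i <+: G.prefixList ρ k := by
  rw [List.prefix_iff_eq_take]
  simp [prefixList, ← List.map_take, List.take_range, show i + 1 ≤ k + 1 by omega]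

lemma eq_prefixList_of_mem_Cyl {ρ : G.Run} {L : List G.S} (hL : L ≠ []) (h : ρ ∈ G.Cyl L) :
    L = G.prefixList ρ (L.length - 1) := by
  have hlen : 0 < L.length := List.length_pos_iff.2 hL
  refine List.ext_getElem (by simp; omega) fun i hi _ => ?_
  rw [← List.getD_eq_getElem L G.init hi, ← h i hi]
  simp [prefixList]

lemma prefix_of_mem_Cyl {ρ : G.Run} {L M : List G.S} (hL : ρ ∈ G.Cyl L) (hM : ρ ∈ G.Cyl M)
    (hlen : L.length ≤ M.length) : L <+: M := by
  rcases eq_or_ne L [] with rfl | hLne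
  · exact List.nil_prefix
  have hMne : M ≠ [] := by rintro rfl; simp_all
  rw [eq_prefixList_of_mem_Cyl hLne hL, eq_prefixList_of_mem_Cyl hMne hM]
  exact prefixList_prefix ρ (by omega)

lemma not_prefix_of_prefix_of_ne {M L : List G.S} (hM : M <+: L) (hne : M ≠ L) : ¬ L <+: M :=
  fun h => hne (hM.eq_of_length (le_antisymm hM.length_le h.length_le))

lemma Cyl_anti {L M : List G.S} (h : L <+: M) : G.Cyl M ⊆ G.Cyl L := by
  rintro ρ hρ i hi
  obtain ⟨t, rfl⟩ := h
  rw [hρ i (by simp; omega)]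
  simp [List.getD_eq_getElem?_getD, List.getElem?_append_left hi]

lemma disjoint_Cyl {L M : List G.S} (hLM : ¬ L <+: M) (hML : ¬ M <+: L) :
    Disjoint (G.Cyl L) (G.Cyl M) := by
  rw [Set.disjoint_left]
  intro ρ hL hM
  rcases le_total L.length M.length with h | h
  · exact hLM (prefix_of_mem_Cyl hL hM h)
  · exact hML (prefix_of_mem_Cyl hM hL h)

lemma mem_Cyl_append_singleton {ρ : G.Run} {L : List G.S} (h : ρ ∈ G.Cyl L) :
    ρ ∈ G.Cyl (L ++ [ρ L.length]) := by
  intro i hi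
  rcases Nat.lt_or_ge i L.length with hi' | hi'
  · simpa [List.getD_eq_getElem?_getD, List.getElem?_append_left hi'] using h i hi'
  · obtain rfl : i = L.length := by simp at hi; omega
    simp [List.getD_eq_getElem?_getD]

lemma Cyl_eq_iUnion (L : List G.S) : G.Cyl L = ⋃ s, G.Cyl (L ++ [s]) :=
  Set.Subset.antisymm (fun _ hρ => Set.mem_iUnion.2 ⟨_, mem_Cyl_append_singleton hρ⟩)
    (Set.iUnion_subset fun _ => Cyl_anti (List.prefix_append _ _))

/-! ### Probabilities of histories -/

def moves (σv : G.Profile) (M : List G.S) : G.P → G.A → ℝ := fun q => (σv q M).1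

lemma moves_nonneg (σv : G.Profile) (M : List G.S) (q : G.P) (a : G.A) : 0 ≤ G.moves σv M q a :=
  (σv q M).2.1 a

lemma stepProb_nonneg (s : G.S) {F : G.P → G.A → ℝ} (hF : ∀ q a, 0 ≤ F q a) (s' : G.S) :
    0 ≤ G.stepProb s F s' :=
  Finset.sum_nonneg fun m _ => Finset.prod_nonneg fun q _ => hF q (m q)

lemma sum_stepProb (s : G.S) {F : G.P → G.A → ℝ} (hF : ∀ q, ∑ a, F q a = 1) :
    ∑ s', G.stepProb s F s' = 1 := by
  simp only [stepProb]
  rw [Finset.sum_fiberwise_of_maps_to (fun m _ => Finset.mem_univ (G.tr s m)),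
    ← Fintype.piFinset_univ, ← Finset.prod_univ_sum]
  simp [hF]

lemma stepProb_eq_zero_of_not_step {s s' : G.S} {F : G.P → G.A → ℝ}
    (hF : ∀ q a, F q a ≠ 0 → a ∈ G.act q s) (h : ¬ G.Step s s') : G.stepProb s F s' = 0 := by
  refine Finset.sum_eq_zero fun m hm => Finset.prod_eq_zero_iff.2 ?_
  by_contra! hm'
  exact h ⟨m, fun q => hF q _ (hm' q (Finset.mem_univ q)), (Finset.mem_filter.1 hm).2⟩

lemma stepProb_eq_sum_update (p : G.P) (s : G.S) (F : G.P → G.A → ℝ) (s' : G.S) :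
    G.stepProb s F s' = ∑ a, F p a * G.stepProb s (Function.update F p (Pi.single a 1)) s' := by
  have key : ∀ m : G.P → G.A, ∏ q, F q (m q) =
      ∑ a, F p a * ∏ q, Function.update F p (Pi.single a 1) q (m q) := by
    intro m
    rw [Finset.sum_eq_single (m p) (fun a _ ha => ?_) (by simp)]
    · rw [← Finset.mul_prod_erase _ _ (Finset.mem_univ p),
        ← Finset.mul_prod_erase _ _ (Finset.mem_univ p)]
      simp only [Function.update_self, Pi.single_eq_same, one_mul]
      congr 1
      exact Finset.prod_congr rfl fun q hq =>
        by rw [Function.update_of_ne (Finset.ne_of_mem_erase hq)]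
    · rw [← Finset.mul_prod_erase _ _ (Finset.mem_univ p)]
      simp [Ne.symm ha]
  simp only [stepProb, key, Finset.mul_sum]
  exact Finset.sum_comm

lemma stepProb_pos_iff (p : G.P) (s : G.S) {F : G.P → G.A → ℝ} (hF : ∀ q a, 0 ≤ F q a)
    (s' : G.S) : 0 < G.stepProb s F s' ↔
      ∃ a, F p a ≠ 0 ∧ 0 < G.stepProb s (Function.update F p (Pi.single a 1)) s' := by
  have hF' : ∀ a, ∀ q b, 0 ≤ Function.update F p (Pi.single a 1) q b := by
    intro a q b
    rcases eq_or_ne q p with rfl | hq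
    · by_cases hb : b = a <;> simp [hb]
    · simpa [Function.update_of_ne hq] using hF q b
  rw [stepProb_eq_sum_update p, Finset.sum_pos_iff_of_nonneg fun a _ =>
    mul_nonneg (hF p a) (stepProb_nonneg s (hF' a) s')]
  simp only [Finset.mem_univ, true_and]
  refine exists_congr fun a => ⟨fun h => ?_, fun ⟨h1, h2⟩ => mul_pos ((hF p a).lt_of_ne' h1) h2⟩
  exact ⟨fun h0 => by simp [h0] at h, pos_of_mul_pos_right h (hF p a)⟩

lemma cylProb_nonneg (σv : G.Profile) (L : List G.S) : 0 ≤ G.cylProb σv L :=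
  Finset.prod_nonneg fun _ _ => stepProb_nonneg _ (moves_nonneg σv _) _

lemma cylProb_congr {σv₁ σv₂ : G.Profile} {L : List G.S}
    (h : ∀ M, M <+: L → M ≠ L → G.moves σv₁ M = G.moves σv₂ M) :
    G.cylProb σv₁ L = G.cylProb σv₂ L := by
  refine Finset.prod_congr rfl fun i hi => ?_
  have hi : i + 1 < L.length := by simp at hi; omega
  have hne : L.take (i + 1) ≠ L := fun he => by
    have := congrArg List.length he
    simp at this; omega
  exact congrArg (G.stepProb _ · _) (h _ (List.take_prefix _ _) hne)

lemma cylProb_append_singleton (σv : G.Profile) {L : List G.S} (hL : L ≠ []) (s : G.S) :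
    G.cylProb σv (L ++ [s]) = G.cylProb σv L * G.stepProb (G.lastS L) (G.moves σv L) s := by
  have hn : 0 < L.length := List.length_pos_iff.2 hL
  simp only [cylProb, List.length_append, List.length_singleton]
  rw [show L.length + 1 - 1 = L.length - 1 + 1 by omega, Finset.prod_range_succ]
  congr 1
  · refine Finset.prod_congr rfl fun i hi => ?_
    simp only [Finset.mem_range] at hi
    rw [List.take_append_of_le_length (by omega), List.take_append_of_le_length (by omega)]
  · rw [List.take_append_of_le_length (by omega), List.take_of_length_le (by omega),
      List.take_of_length_le (by simp; omega), lastS_append_singleton]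
    rfl

lemma cylProb_eq_zero_of_prefix (σv : G.Profile) {M L : List G.S} (h : M <+: L)
    (hz : G.cylProb σv M = 0) : G.cylProb σv L = 0 := by
  have hM : M ≠ [] := by rintro rfl; simp [cylProb] at hz
  obtain ⟨t, rfl⟩ := h
  induction t using List.reverseRecOn with
  | nil => simpa using hz
  | append_singleton t z ih =>
    rw [← List.append_assoc, cylProb_append_singleton _ (by simp [hM]), ih, zero_mul]

lemma cylProb_pos_of_prefix (σv : G.Profile) {M L : List G.S} (h : M <+: L)
    (hpos : 0 < G.cylProb σv L) : 0 < G.cylProb σv M :=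
  (cylProb_nonneg σv M).lt_of_ne' fun hz => hpos.ne' (cylProb_eq_zero_of_prefix σv h hz)

/-- The ratio `cylProb (K ++ t) / cylProb K` only depends on the moves below `K`; cross-multiplied
to avoid dividing by zero. -/
lemma cylProb_append_mul_comm {σv₁ σv₂ : G.Profile} {K : List G.S} (hK : K ≠ [])
    (h : ∀ M, K <+: M → G.moves σv₁ M = G.moves σv₂ M) (t : List G.S) :
    G.cylProb σv₁ (K ++ t) * G.cylProb σv₂ K = G.cylProb σv₂ (K ++ t) * G.cylProb σv₁ K := by
  induction t using List.reverseRecOn with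
  | nil => simp [mul_comm]
  | append_singleton t z ih =>
    have hKt : K ++ t ≠ [] := by simp [hK]
    rw [← List.append_assoc, cylProb_append_singleton _ hKt, cylProb_append_singleton _ hKt,
      h _ (List.prefix_append _ _)]
    linear_combination G.stepProb (G.lastS (K ++ t)) (G.moves σv₂ (K ++ t)) z * ih

lemma IsHistory.ne_nil {L : List G.S} (hL : G.IsHistory L) : L ≠ [] := by
  rintro rfl
  simp [IsHistory] at hL

lemma isHistory_iff {L : List G.S} :
    G.IsHistory L ↔ L.head? = some G.init ∧ L.IsChain G.Step :=
  Iff.rfl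

lemma isHistory_singleton (x : G.S) : G.IsHistory [x] ↔ x = G.init := by
  simp [isHistory_iff]

lemma isHistory_append_singleton {L : List G.S} (hL : L ≠ []) (s : G.S) :
    G.IsHistory (L ++ [s]) ↔ G.IsHistory L ∧ G.Step (G.lastS L) s := by
  obtain ⟨x, L', rfl⟩ := List.exists_cons_of_ne_nil hL
  have hlast : (x :: L').getLast? = some (G.lastS (x :: L')) := by
    simp [lastS, List.getLast?_eq_some_getLast]
  simp only [isHistory_iff, List.head?_cons, List.isChain_append,
    List.isChain_singleton, hlast]
  simp [and_assoc]

def histProb (σv : G.Profile) (L : List G.S) : ℝ :=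
  if G.IsHistory L then G.cylProb σv L else 0

lemma histProb_append_singleton (σv : G.Profile) {L : List G.S} (hL : L ≠ []) (s : G.S) :
    G.histProb σv (L ++ [s]) = G.histProb σv L * G.stepProb (G.lastS L) (G.moves σv L) s := by
  by_cases hs : G.Step (G.lastS L) s
  · by_cases hh : G.IsHistory L <;>
      simp [histProb, isHistory_append_singleton hL, hs, hh, cylProb_append_singleton σv hL]
  · rw [stepProb_eq_zero_of_not_step (F := G.moves σv L) (fun q a => (σv q L).2.2.2 a) hs]
    simp [histProb, isHistory_append_singleton hL, hs]

lemma sum_histProb_ofFn (σv : G.Profile) (n : ℕ) :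
    ∑ f : Fin (n + 1) → G.S, G.histProb σv (List.ofFn f) = 1 := by
  rw [sum_ofFn_eq_sum_singleton _ fun L hL => by
    rw [← Finset.sum_congr rfl fun s _ => (histProb_append_singleton σv hL s).symm,
      ← Finset.mul_sum, sum_stepProb (F := G.moves σv L) _ fun q => (σv q L).2.2.1, mul_one]]
  simp [histProb, isHistory_singleton, cylProb]

/-! ### The measure of cylinders -/

lemma measurableSet_Cyl (L : List G.S) : MeasurableSet (G.Cyl L) := by
  have : G.Cyl L = ⋂ i ∈ Finset.range L.length, (fun ρ : G.Run => ρ i) ⁻¹' {L.getD i G.init} := by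
    ext ρ
    simp [Cyl]
  rw [this]
  exact .biInter (Set.to_countable _) fun i _ => measurable_pi_apply i (.of_discrete)

lemma measurableSpace_eq_generateFrom_Cyl :
    (inferInstance : MeasurableSpace G.Run) = .generateFrom (Set.range G.Cyl) := by
  refine le_antisymm (iSup_le fun i => ?_) (MeasurableSpace.generateFrom_le ?_)
  · rintro _ ⟨A, -, rfl⟩
    have : (fun ρ : G.Run => ρ i) ⁻¹' A =
        ⋃ L ∈ {L : List G.S | L.length = i + 1 ∧ L.getD i G.init ∈ A}, G.Cyl L := by
      ext ρ
      simp only [Set.mem_preimage, Set.mem_iUnion, exists_prop]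
      refine ⟨fun h => ⟨_, ⟨length_prefixList ρ i, by rwa [prefixList_getD ρ le_rfl]⟩,
        mem_Cyl_prefixList ρ i⟩, ?_⟩
      rintro ⟨L, ⟨hlen, hA⟩, hρ⟩
      rwa [hρ i (by omega)]
    rw [this]
    exact .biUnion (Set.to_countable _) fun L _ =>
      MeasurableSpace.measurableSet_generateFrom ⟨L, rfl⟩
  · rintro _ ⟨L, rfl⟩
    exact measurableSet_Cyl L

lemma isPiSystem_range_Cyl : IsPiSystem (Set.range G.Cyl) := by
  rintro _ ⟨L, rfl⟩ _ ⟨M, rfl⟩ ⟨ρ, hL, hM⟩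
  rcases le_total L.length M.length with h | h
  · exact ⟨M, (Set.inter_eq_right.2 (Cyl_anti (prefix_of_mem_Cyl hL hM h))).symm⟩
  · exact ⟨L, (Set.inter_eq_left.2 (Cyl_anti (prefix_of_mem_Cyl hM hL h))).symm⟩

lemma measure_ext_of_Cyl {μ ν : Measure G.Run} [IsFiniteMeasure μ]
    (h : ∀ L, μ (G.Cyl L) = ν (G.Cyl L)) : μ = ν :=
  ext_of_generate_finite _ measurableSpace_eq_generateFrom_Cyl isPiSystem_range_Cyl
    (by rintro _ ⟨L, rfl⟩; exact h L) (by simpa using h [])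

lemma measure_Cyl_eq_sum (μ : Measure G.Run) (L : List G.S) :
    μ (G.Cyl L) = ∑ s, μ (G.Cyl (L ++ [s])) := by
  rw [← tsum_fintype (L := .unconditional _), ← measure_iUnion (fun s s' hs => disjoint_Cyl ?_ ?_)
    fun _ => measurableSet_Cyl _, ← Cyl_eq_iUnion]
  · exact fun h => hs (by simpa using h.eq_of_length (by simp))
  · exact fun h => hs (by simpa using (h.eq_of_length (by simp)).symm)

lemma sum_measure_Cyl_ofFn (μ : Measure G.Run) [IsProbabilityMeasure μ] (n : ℕ) :
    ∑ f : Fin (n + 1) → G.S, μ (G.Cyl (List.ofFn f)) = 1 := by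
  rw [sum_ofFn_eq_sum_singleton (fun L => μ (G.Cyl L)) fun L _ => (measure_Cyl_eq_sum μ L).symm]
  simpa using (measure_Cyl_eq_sum μ []).symm

variable {Pr : G.Profile → Measure G.Run}

/-- Non-histories carry no mass: the histories of each length already have total mass one. -/
lemma measure_Cyl (hPr : G.ValidPr Pr) (σv : G.Profile) {L : List G.S} (hL : L ≠ []) :
    Pr σv (G.Cyl L) = ENNReal.ofReal (G.histProb σv L) := by
  by_cases hh : G.IsHistory L
  · simp [histProb, hh, hPr.2 σv L hh]
  have := hPr.1 σv
  obtain ⟨x, L', rfl⟩ := List.exists_cons_of_ne_nil hL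
  have hle : ∀ f : Fin (L'.length + 1) → G.S,
      G.histProb σv (List.ofFn f) ≤ (Pr σv (G.Cyl (List.ofFn f))).toReal := by
    intro f
    unfold histProb
    split_ifs with hf
    · rw [hPr.2 σv _ hf, ENNReal.toReal_ofReal (cylProb_nonneg _ _)]
    · exact ENNReal.toReal_nonneg
  have heq := (Finset.sum_eq_sum_iff_of_le fun f _ => hle f).1 (by
    rw [sum_histProb_ofFn, ← ENNReal.toReal_sum fun f _ => measure_ne_top _ _,
      sum_measure_Cyl_ofFn, ENNReal.toReal_one]) (fun j => (x :: L')[j]) (Finset.mem_univ _)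
  rw [show List.ofFn (fun j : Fin (L'.length + 1) => (x :: L')[j]) = x :: L' from
    List.ofFn_getElem (xs := x :: L')] at heq
  simp only [histProb, hh, if_false] at heq ⊢
  simpa [ENNReal.toReal_eq_zero_iff, measure_ne_top] using heq.symm

lemma measure_Cyl_congr (hPr : G.ValidPr Pr) {σv₁ σv₂ : G.Profile} {L : List G.S}
    (h : G.cylProb σv₁ L = G.cylProb σv₂ L) : Pr σv₁ (G.Cyl L) = Pr σv₂ (G.Cyl L) := by
  rcases eq_or_ne L [] with rfl | hL
  · have := hPr.1 σv₁
    have := hPr.1 σv₂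
    simp
  · simp [measure_Cyl hPr _ hL, histProb, h]

lemma ofReal_mul_measure_Cyl_eq (hPr : G.ValidPr Pr) {σv₁ σv₂ : G.Profile} {L : List G.S}
    (hL : L ≠ []) {x y : ℝ} (hx : 0 ≤ x) (hy : 0 ≤ y)
    (h : x * G.cylProb σv₁ L = y * G.cylProb σv₂ L) :
    ENNReal.ofReal x * Pr σv₁ (G.Cyl L) = ENNReal.ofReal y * Pr σv₂ (G.Cyl L) := by
  rw [measure_Cyl hPr _ hL, measure_Cyl hPr _ hL, ← ENNReal.ofReal_mul hx, ← ENNReal.ofReal_mul hy]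
  unfold histProb
  split_ifs <;> simp [h]

lemma restrict_compl_Cyl_eq (hPr : G.ValidPr Pr) {σv₁ σv₂ : G.Profile} {l : List G.S}
    (h : ∀ M, ¬ l <+: M → G.moves σv₁ M = G.moves σv₂ M) :
    (Pr σv₁).restrict (G.Cyl l)ᶜ = (Pr σv₂).restrict (G.Cyl l)ᶜ := by
  have := hPr.1 σv₁
  have := hPr.1 σv₂
  have hcyl : ∀ L, L <+: l ∨ ¬ l <+: L → G.cylProb σv₁ L = G.cylProb σv₂ L := by
    refine fun L hL => cylProb_congr fun M hML hne => h M fun hlM => ?_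
    rcases hL with hLl | hlL
    · exact hne (hML.eq_of_length (by
        have := hlM.length_le; have := hML.length_le; have := hLl.length_le; omega))
    · exact hlL (hlM.trans hML)
  refine measure_ext_of_Cyl fun L => ?_
  rw [Measure.restrict_apply (measurableSet_Cyl L), Measure.restrict_apply (measurableSet_Cyl L)]
  by_cases hlL : l <+: L
  · simp [← Set.sdiff_eq, Set.sdiff_eq_empty.2 (Cyl_anti hlL)]
  by_cases hLl : L <+: l
  · rw [← Set.sdiff_eq, measure_sdiff (Cyl_anti hLl) (measurableSet_Cyl l).nullMeasurableSet
      (measure_ne_top _ _), measure_sdiff (Cyl_anti hLl) (measurableSet_Cyl l).nullMeasurableSet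
      (measure_ne_top _ _), measure_Cyl_congr hPr (hcyl L (.inl hLl)),
      measure_Cyl_congr hPr (hcyl l (.inl (List.prefix_refl l)))]
  · rw [Set.inter_eq_left.2 (disjoint_Cyl hLl hlL).subset_compl_right,
      measure_Cyl_congr hPr (hcyl L (.inr hlL))]

lemma smul_restrict_Cyl_eq (hPr : G.ValidPr Pr) {σv₁ σv₂ : G.Profile} {K : List G.S}
    (hK : K ≠ []) (h : ∀ M, K <+: M → G.moves σv₁ M = G.moves σv₂ M) :
    ENNReal.ofReal (G.cylProb σv₂ K) • (Pr σv₁).restrict (G.Cyl K) =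
      ENNReal.ofReal (G.cylProb σv₁ K) • (Pr σv₂).restrict (G.Cyl K) := by
  have := hPr.1 σv₁
  have := ((Pr σv₁).restrict (G.Cyl K)).smul_finite (ENNReal.ofReal_ne_top (r := G.cylProb σv₂ K))
  refine measure_ext_of_Cyl fun L => ?_
  simp only [Measure.smul_apply, Measure.restrict_apply (measurableSet_Cyl L), smul_eq_mul]
  by_cases hKL : K <+: L
  · obtain ⟨t, rfl⟩ := hKL
    rw [Set.inter_eq_left.2 (Cyl_anti (List.prefix_append _ _))]
    exact ofReal_mul_measure_Cyl_eq hPr (by simp [hK]) (cylProb_nonneg _ _) (cylProb_nonneg _ _)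
      (by linear_combination cylProb_append_mul_comm hK h t)
  by_cases hLK : L <+: K
  · rw [Set.inter_eq_right.2 (Cyl_anti hLK)]
    exact ofReal_mul_measure_Cyl_eq hPr hK (cylProb_nonneg _ _) (cylProb_nonneg _ _) (mul_comm _ _)
  · simp [(disjoint_Cyl hLK hKL).inter_eq]

/-! ### Winning on parts of the run space -/

variable (Pr) in
def WinsOn (st : Sem) (σv : G.Profile) (Φ U : Set G.Run) : Prop :=
  match st with
  | .Sure => G.Outcome σv ∩ U ⊆ Φ
  | .Almost => Pr σv (Φᶜ ∩ U) = 0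

variable {st : Sem} {Φ : Set G.Run}

lemma wins_iff_winsOn (hΦ : MeasurableSet Φ) (hPr : G.ValidPr Pr) (σv : G.Profile)
    (l : List G.S) : G.Wins Pr st σv Φ ↔
      WinsOn Pr st σv Φ (G.Cyl l)ᶜ ∧ ∀ s, WinsOn Pr st σv Φ (G.Cyl (l ++ [s])) := by
  have hcover : (G.Cyl l)ᶜ ∪ ⋃ s, G.Cyl (l ++ [s]) = Set.univ := by
    rw [← Cyl_eq_iUnion, Set.compl_union_self]
  cases st
  · show G.Outcome σv ⊆ Φ ↔ _
    conv_lhs => rw [← Set.inter_univ (G.Outcome σv), ← hcover]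
    simp only [WinsOn, Set.inter_union_distrib_left, Set.inter_iUnion, Set.union_subset_iff,
      Set.iUnion_subset_iff]
  · have := hPr.1 σv
    show Pr σv Φ = 1 ↔ _
    rw [← prob_compl_eq_zero_iff hΦ, ← Set.inter_univ Φᶜ, ← hcover]
    simp only [WinsOn, Set.inter_union_distrib_left, Set.inter_iUnion, measure_union_null_iff,
      measure_iUnion_null_iff]

lemma winsOn_of_cylProb_eq_zero (hPr : G.ValidPr Pr) {σv : G.Profile} {K : List G.S}
    (hK : K ≠ []) (hz : G.cylProb σv K = 0) : WinsOn Pr st σv Φ (G.Cyl K) := by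
  cases st
  · rintro ρ ⟨hρ, hρK⟩
    have := (hρ (K.length - 1)).2
    rw [← eq_prefixList_of_mem_Cyl hK hρK, hz] at this
    exact absurd this (lt_irrefl 0)
  · exact measure_mono_null Set.inter_subset_right (by simp [measure_Cyl hPr σv hK, histProb, hz])

lemma winsOn_compl_Cyl_congr (hΦ : MeasurableSet Φ) (hPr : G.ValidPr Pr) {σv₁ σv₂ : G.Profile}
    {l : List G.S} (h : ∀ M, ¬ l <+: M → G.moves σv₁ M = G.moves σv₂ M) :
    WinsOn Pr st σv₁ Φ (G.Cyl l)ᶜ ↔ WinsOn Pr st σv₂ Φ (G.Cyl l)ᶜ := by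
  cases st
  · have : G.Outcome σv₁ ∩ (G.Cyl l)ᶜ = G.Outcome σv₂ ∩ (G.Cyl l)ᶜ := by
      ext ρ
      simp only [Set.mem_inter_iff, Set.mem_compl_iff, and_congr_left_iff]
      refine fun hρ => forall_congr' fun k => and_congr_right fun _ => ?_
      rw [cylProb_congr fun M hM _ => h M fun hlM => hρ (Cyl_anti (hlM.trans hM)
        (mem_Cyl_prefixList ρ k))]
    simp only [WinsOn, this]
  · simp only [WinsOn, ← Measure.restrict_apply hΦ.compl, restrict_compl_Cyl_eq hPr h]

lemma winsOn_Cyl_of_agree (hΦ : MeasurableSet Φ) (hPr : G.ValidPr Pr) {σv₁ σv₂ : G.Profile}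
    {K : List G.S} (hK : K ≠ []) (h : ∀ M, K <+: M → G.moves σv₁ M = G.moves σv₂ M)
    (hr : 0 < G.cylProb σv₁ K → 0 < G.cylProb σv₂ K) (h₂ : WinsOn Pr st σv₂ Φ (G.Cyl K)) :
    WinsOn Pr st σv₁ Φ (G.Cyl K) := by
  rcases (cylProb_nonneg σv₁ K).eq_or_lt with hz | hr₁
  · exact winsOn_of_cylProb_eq_zero hPr hK hz.symm
  have hr₂ := hr hr₁
  cases st
  · rintro ρ ⟨hρ, hρK⟩
    refine h₂ ⟨fun k => ⟨(hρ k).1, ?_⟩, hρK⟩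
    rcases le_total (G.prefixList ρ k).length K.length with hlen | hlen
    · exact cylProb_pos_of_prefix _ (prefix_of_mem_Cyl (mem_Cyl_prefixList ρ k) hρK hlen) hr₂
    · obtain ⟨t, ht⟩ := prefix_of_mem_Cyl hρK (mem_Cyl_prefixList ρ k) hlen
      have key := cylProb_append_mul_comm hK h t
      rw [ht] at key
      exact pos_of_mul_pos_left (key ▸ mul_pos (hρ k).2 hr₂) (cylProb_nonneg σv₁ K)
  · have key := congrArg (· Φᶜ) (smul_restrict_Cyl_eq hPr hK h)
    simp only [Measure.smul_apply, Measure.restrict_apply hΦ.compl, smul_eq_mul] at key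
    change Pr σv₂ (Φᶜ ∩ G.Cyl K) = 0 at h₂
    rw [h₂, mul_zero, mul_eq_zero] at key
    exact key.resolve_left (by simpa using hr₂)

lemma wins_congr_of_cylProb_eq_zero (hΦ : MeasurableSet Φ) (hPr : G.ValidPr Pr)
    {σv₁ σv₂ : G.Profile} {K : List G.S}
    (h : ∀ M, ¬ K <+: M → G.moves σv₁ M = G.moves σv₂ M) (hz : G.cylProb σv₁ K = 0) :
    G.Wins Pr st σv₁ Φ ↔ G.Wins Pr st σv₂ Φ := by
  have hz₂ : G.cylProb σv₂ K = 0 := by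
    rwa [← cylProb_congr fun M hM hne => h M (not_prefix_of_prefix_of_ne hM hne)]
  have hsub : ∀ σv, G.cylProb σv K = 0 → ∀ s, WinsOn Pr st σv Φ (G.Cyl (K ++ [s])) :=
    fun σv hz s => winsOn_of_cylProb_eq_zero hPr (by simp)
      (cylProb_eq_zero_of_prefix σv (List.prefix_append _ _) hz)
  rw [wins_iff_winsOn hΦ hPr _ K, wins_iff_winsOn hΦ hPr _ K, winsOn_compl_Cyl_congr hΦ hPr h]
  simp [hsub _ hz, hsub _ hz₂]

/-! ### Changing a strategy at one history -/

variable {p : G.P}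

/-- `Function.update` at the type `Strategy p`: since `Strategy` is a plain `def`, the bare
`Function.update σ l β` is not type-correct at reducible transparency, which defeats `rw`. -/
def Strategy.update (σ : G.Strategy p) (l : List G.S) (β : G.Mixed p (G.lastS l)) :
    G.Strategy p :=
  Function.update (β := fun M => G.Mixed p (G.lastS M)) σ l β

@[simp] lemma Strategy.update_self (σ : G.Strategy p) (l : List G.S) (β : G.Mixed p (G.lastS l)) :
    σ.update l β l = β :=
  Function.update_self ..

lemma Strategy.update_of_ne (σ : G.Strategy p) {l M : List G.S} (β : G.Mixed p (G.lastS l))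
    (h : M ≠ l) : σ.update l β M = σ M :=
  Function.update_of_ne h ..

@[simp] lemma Strategy.update_idem (σ : G.Strategy p) (l : List G.S)
    (β β' : G.Mixed p (G.lastS l)) : (σ.update l β).update l β' = σ.update l β' :=
  Function.update_idem ..

lemma moves_combine_self (σ : G.Strategy p) (τ : G.CoStrategy p) (M : List G.S) :
    G.moves (G.combine σ τ) M p = (σ M).1 := by
  simp [moves, combine]

lemma moves_combine_of_ne (σ : G.Strategy p) (τ : G.CoStrategy p) {q : G.P} (hq : q ≠ p)
    (M : List G.S) : G.moves (G.combine σ τ) M q = (τ q hq M).1 := by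
  simp [moves, combine, hq]

lemma moves_combine_congr {σ₁ σ₂ : G.Strategy p} {τ₁ τ₂ : G.CoStrategy p} {M : List G.S}
    (hσ : σ₁ M = σ₂ M) (hτ : ∀ q hq, τ₁ q hq M = τ₂ q hq M) :
    G.moves (G.combine σ₁ τ₁) M = G.moves (G.combine σ₂ τ₂) M := by
  funext q
  by_cases hq : q = p
  · subst hq
    simp [moves_combine_self, hσ]
  · simp [moves_combine_of_ne _ _ hq, hτ]

lemma moves_combine_eq_update (σ σ' : G.Strategy p) {τ τ' : G.CoStrategy p} {M : List G.S}
    (hτ : ∀ q hq, τ' q hq M = τ q hq M) :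
    G.moves (G.combine σ' τ') M = Function.update (G.moves (G.combine σ τ) M) p (σ' M).1 := by
  funext q
  by_cases hq : q = p
  · subst hq
    rw [moves_combine_self, Function.update_self]
  · rw [moves_combine_of_ne _ _ hq, Function.update_of_ne hq, moves_combine_of_ne _ _ hq, hτ]

lemma moves_combine_update_of_ne (σ : G.Strategy p) (τ : G.CoStrategy p) {l M : List G.S}
    (β : G.Mixed p (G.lastS l)) (hM : M ≠ l) :
    G.moves (G.combine (σ.update l β) τ) M = G.moves (G.combine σ τ) M :=
  moves_combine_congr (σ.update_of_ne β hM) fun _ _ => rfl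

lemma cylProb_combine_update (σ : G.Strategy p) (τ : G.CoStrategy p) (l : List G.S)
    (β : G.Mixed p (G.lastS l)) :
    G.cylProb (G.combine (σ.update l β) τ) l = G.cylProb (G.combine σ τ) l :=
  cylProb_congr fun _ _ hne => moves_combine_update_of_ne σ τ β hne

lemma dirac_val (s : G.S) {a : G.A} (ha : a ∈ G.act p s) : (G.dirac p s a ha).1 = Pi.single a 1 :=
  funext fun b => (Pi.single_apply a 1 b).symm

def diracUpdate (σ : G.Strategy p) (l : List G.S) (a : G.A) (ha : a ∈ G.Supp (σ l)) :
    G.Strategy p :=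
  σ.update l (G.dirac p (G.lastS l) a ((σ l).2.2.2 a ha))

lemma cylProb_append_singleton_pos_iff (σ : G.Strategy p) (τ : G.CoStrategy p)
    {l : List G.S} (hl : l ≠ []) (s : G.S) :
    0 < G.cylProb (G.combine σ τ) (l ++ [s]) ↔ ∃ a, ∃ ha : a ∈ G.Supp (σ l),
      0 < G.cylProb (G.combine (diracUpdate σ l a ha) τ) (l ++ [s]) := by
  have hr := cylProb_nonneg (G.combine σ τ) l
  have hmoves : ∀ a (ha : a ∈ G.Supp (σ l)), G.moves (G.combine (diracUpdate σ l a ha) τ) l =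
      Function.update (G.moves (G.combine σ τ) l) p (Pi.single a 1) := fun a ha => by
    rw [moves_combine_eq_update σ _ fun _ _ => rfl, diracUpdate, Strategy.update_self, dirac_val]
  have hcyl : ∀ a (ha : a ∈ G.Supp (σ l)),
      G.cylProb (G.combine (diracUpdate σ l a ha) τ) l = G.cylProb (G.combine σ τ) l :=
    fun _ _ => cylProb_combine_update ..
  simp only [cylProb_append_singleton _ hl, hcyl]
  constructor
  · intro h
    obtain ⟨a, ha, hs⟩ := (stepProb_pos_iff p _ (moves_nonneg _ _) s).1 (pos_of_mul_pos_right h hr)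
    rw [moves_combine_self] at ha
    refine ⟨a, ha, mul_pos (pos_of_mul_pos_left h (stepProb_nonneg _ (moves_nonneg _ _) _)) ?_⟩
    rwa [hmoves a ha]
  · rintro ⟨a, ha, h⟩
    refine mul_pos (pos_of_mul_pos_left h (stepProb_nonneg _ (moves_nonneg _ _) _))
      ((stepProb_pos_iff p _ (moves_nonneg _ _) s).2 ⟨a, by rwa [moves_combine_self], ?_⟩)
    rw [← hmoves a ha]
    exact pos_of_mul_pos_right h hr

lemma supp_nonempty {s : G.S} (α : G.Mixed p s) : (G.Supp α).Nonempty := by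
  by_contra! h
  have := α.2.2.1
  simp_all [Supp, Set.eq_empty_iff_forall_notMem]

lemma wins_iff_forall_diracUpdate (hΦ : MeasurableSet Φ) (hPr : G.ValidPr Pr) {l : List G.S}
    (hl : l ≠ []) (σ : G.Strategy p) (τ : G.CoStrategy p) :
    G.Wins Pr st (G.combine σ τ) Φ ↔
      ∀ a (ha : a ∈ G.Supp (σ l)), G.Wins Pr st (G.combine (diracUpdate σ l a ha) τ) Φ := by
  have hoff : ∀ a ha M, ¬ l <+: M →
      G.moves (G.combine (diracUpdate σ l a ha) τ) M = G.moves (G.combine σ τ) M :=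
    fun a ha M hM => moves_combine_update_of_ne σ τ _ (by rintro rfl; exact hM (List.prefix_refl _))
  have hsub : ∀ a ha s M, l ++ [s] <+: M →
      G.moves (G.combine (diracUpdate σ l a ha) τ) M = G.moves (G.combine σ τ) M :=
    fun a ha s M hM => moves_combine_update_of_ne σ τ _ (by rintro rfl; simpa using hM.length_le)
  simp only [wins_iff_winsOn hΦ hPr _ l]
  constructor
  · rintro ⟨hc, hs⟩ a ha
    exact ⟨(winsOn_compl_Cyl_congr hΦ hPr (hoff a ha)).2 hc, fun s =>
      winsOn_Cyl_of_agree hΦ hPr (by simp) (hsub a ha s)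
        (fun h => (cylProb_append_singleton_pos_iff σ τ hl s).2 ⟨a, ha, h⟩) (hs s)⟩
  · intro h
    obtain ⟨a, ha⟩ := supp_nonempty (σ l)
    refine ⟨(winsOn_compl_Cyl_congr hΦ hPr (hoff a ha)).1 (h a ha).1, fun s => ?_⟩
    by_cases hpos : 0 < G.cylProb (G.combine σ τ) (l ++ [s])
    · obtain ⟨b, hb, hpos'⟩ := (cylProb_append_singleton_pos_iff σ τ hl s).1 hpos
      exact winsOn_Cyl_of_agree hΦ hPr (by simp) (fun M hM => (hsub b hb s M hM).symm)
        (fun _ => hpos') ((h b hb).2 s)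
    · exact winsOn_of_cylProb_eq_zero hPr (by simp)
        (le_antisymm (not_lt.1 hpos) (cylProb_nonneg _ _))

/-! ### Dominance of moves -/

lemma isHistory_of_mem_histOfS {σ : G.Strategy p} {l : List G.S} (h : l ∈ G.HistOfS σ) :
    G.IsHistory l :=
  (Set.mem_iUnion.1 h).choose_spec.1

lemma cylProb_eq_zero_of_not_mem_histOfS {σ : G.Strategy p} {l : List G.S} (hl : G.IsHistory l)
    (h : l ∉ G.HistOfS σ) (τ : G.CoStrategy p) : G.cylProb (G.combine σ τ) l = 0 :=
  le_antisymm (not_lt.1 fun hpos => h (Set.mem_iUnion.2 ⟨τ, hl, hpos⟩)) (cylProb_nonneg _ _)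

lemma wins_combine_update_iff_of_cylProb_eq_zero (hΦ : MeasurableSet Φ) (hPr : G.ValidPr Pr)
    {σ : G.Strategy p} {τ : G.CoStrategy p} {l : List G.S}
    (hz : G.cylProb (G.combine σ τ) l = 0) (β : G.Mixed p (G.lastS l)) :
    G.Wins Pr st (G.combine (σ.update l β) τ) Φ ↔ G.Wins Pr st (G.combine σ τ) Φ :=
  wins_congr_of_cylProb_eq_zero hΦ hPr
    (fun M hM => moves_combine_update_of_ne σ τ β (by rintro rfl; exact hM (List.prefix_refl _)))
    (by rwa [cylProb_combine_update])

variable {win : G.P → Set G.Run}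

lemma WDom.trans {σ₁ σ₂ σ₃ : G.Strategy p} (h₁ : G.WDom Pr win st σ₁ σ₂)
    (h₂ : G.WDom Pr win st σ₂ σ₃) : G.WDom Pr win st σ₁ σ₃ :=
  fun τ hw => h₂ τ (h₁ τ hw)

lemma wdom_update_of_supp_subset (hwin : MeasurableSet (win p)) (hPr : G.ValidPr Pr)
    {l : List G.S} (hl : l ≠ []) (σ : G.Strategy p) {γ : G.Mixed p (G.lastS l)}
    (hsub : G.Supp γ ⊆ G.Supp (σ l)) : G.WDom Pr win st σ (σ.update l γ) := by
  intro τ hw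
  rw [wins_iff_forall_diracUpdate hwin hPr hl] at hw ⊢
  intro a ha
  have ha' : a ∈ G.Supp (σ l) := hsub (by simpa using ha)
  convert hw a ha' using 2
  simp [diracUpdate]

lemma mWDom_of_supp_subset (hwin : MeasurableSet (win p)) (hPr : G.ValidPr Pr)
    {l : List G.S} {β γ : G.Mixed p (G.lastS l)} (hsub : G.Supp γ ⊆ G.Supp β) :
    G.MWDom Pr win st l β γ := by
  rintro σ hσ rfl
  exact ⟨σ.update l γ, σ.update_self l γ,
    wdom_update_of_supp_subset hwin hPr (isHistory_of_mem_histOfS hσ).ne_nil σ hsub⟩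

lemma mWDom_trans (hwin : MeasurableSet (win p)) (hPr : G.ValidPr Pr) {l : List G.S}
    {β γ ζ : G.Mixed p (G.lastS l)} (h₁ : G.MWDom Pr win st l β γ)
    (h₂ : G.MWDom Pr win st l γ ζ) : G.MWDom Pr win st l β ζ := by
  intro σ hσ hσl
  obtain ⟨σ₁, hσ₁l, hσσ₁⟩ := h₁ σ hσ hσl
  by_cases hσ₁ : l ∈ G.HistOfS σ₁
  · obtain ⟨σ₂, hσ₂l, hσ₁σ₂⟩ := h₂ σ₁ hσ₁ hσ₁l
    exact ⟨σ₂, hσ₂l, hσσ₁.trans hσ₁σ₂⟩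
  · refine ⟨σ₁.update l ζ, σ₁.update_self l ζ, fun τ hw => ?_⟩
    exact (wins_combine_update_iff_of_cylProb_eq_zero hwin hPr
      (cylProb_eq_zero_of_not_mem_histOfS (isHistory_of_mem_histOfS hσ) hσ₁ τ) ζ).2 (hσσ₁ τ hw)

/-! ### Merging Dirac moves into a randomised one -/

lemma winsOn_of_wins (hΦ : MeasurableSet Φ) (hPr : G.ValidPr Pr) {σv : G.Profile}
    (h : G.Wins Pr st σv Φ) (U : Set G.Run) : WinsOn Pr st σv Φ U := by
  cases st
  · exact Set.inter_subset_left.trans h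
  · have := hPr.1 σv
    exact measure_mono_null Set.inter_subset_left ((prob_compl_eq_zero_iff hΦ).2 h)

def graft {q : G.P} (K : List G.S) (σ θ : G.Strategy q) : G.Strategy q :=
  fun M => if K <+: M then θ M else σ M

lemma graft_of_prefix {q : G.P} {K M : List G.S} (σ θ : G.Strategy q) (h : K <+: M) :
    graft K σ θ M = θ M :=
  if_pos h

lemma graft_of_not_prefix {q : G.P} {K M : List G.S} (σ θ : G.Strategy q) (h : ¬ K <+: M) :
    graft K σ θ M = σ M :=
  if_neg h

def coGraft (K : List G.S) (τ η : G.CoStrategy p) : G.CoStrategy p :=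
  fun q hq => graft K (τ q hq) (η q hq)

lemma coGraft_of_prefix {K M : List G.S} (τ η : G.CoStrategy p) (h : K <+: M) (q : G.P)
    (hq : q ≠ p) : coGraft K τ η q hq M = η q hq M :=
  graft_of_prefix _ _ h

lemma coGraft_of_not_prefix {K M : List G.S} (τ η : G.CoStrategy p) (h : ¬ K <+: M) (q : G.P)
    (hq : q ≠ p) : coGraft K τ η q hq M = τ q hq M :=
  graft_of_not_prefix _ _ h

lemma wins_coGraft (hΦ : MeasurableSet Φ) (hPr : G.ValidPr Pr) {l : List G.S} (hl : l ≠ [])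
    (σ : G.Strategy p) {τ₁ τ₂ : G.CoStrategy p} (h₁ : G.Wins Pr st (G.combine σ τ₁) Φ)
    (h₂ : G.Wins Pr st (G.combine σ τ₂) Φ) (hr : 0 < G.cylProb (G.combine σ τ₂) l) :
    G.Wins Pr st (G.combine σ (coGraft l τ₁ τ₂)) Φ := by
  rw [wins_iff_winsOn hΦ hPr _ l] at h₁ h₂ ⊢
  have hon : ∀ M, l <+: M →
      G.moves (G.combine σ (coGraft l τ₁ τ₂)) M = G.moves (G.combine σ τ₂) M :=
    fun M hM => moves_combine_congr rfl (coGraft_of_prefix _ _ hM)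
  refine ⟨(winsOn_compl_Cyl_congr hΦ hPr fun M hM =>
      moves_combine_congr rfl (coGraft_of_not_prefix _ _ hM)).2 h₁.1,
    fun s => winsOn_Cyl_of_agree hΦ hPr (by simp)
      (fun M hM => hon M ((List.prefix_append _ _).trans hM)) (fun hp => ?_) (h₂.2 s)⟩
  rw [cylProb_append_singleton _ hl, hon l (List.prefix_refl l)] at hp
  rw [cylProb_append_singleton _ hl]
  exact mul_pos hr (pos_of_mul_pos_right hp (cylProb_nonneg _ _))

variable (Pr st Φ) in
def HasWinningStrategyFrom (p : G.P) (K : List G.S) : Prop :=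
  ∃ θ : G.Strategy p, ∀ (σ : G.Strategy p) (τ : G.CoStrategy p),
    WinsOn Pr st (G.combine (graft K σ θ) τ) Φ (G.Cyl K)

lemma hasWinningStrategyFrom_of_forall_coGraft (hΦ : MeasurableSet Φ) (hPr : G.ValidPr Pr)
    {K : List G.S} (hK : K ≠ []) (θ : G.Strategy p) (τ : G.CoStrategy p)
    (h : ∀ η, G.Wins Pr st (G.combine θ (coGraft K τ η)) Φ ∧
      0 < G.cylProb (G.combine θ (coGraft K τ η)) K) :
    HasWinningStrategyFrom Pr st Φ p K := by
  refine ⟨θ, fun σ η => ?_⟩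
  exact winsOn_Cyl_of_agree hΦ hPr hK
    (fun M hM => moves_combine_congr (graft_of_prefix _ _ hM)
      fun q hq => (coGraft_of_prefix _ _ hM q hq).symm)
    (fun _ => (h η).2) (winsOn_of_wins hΦ hPr (h η).1 _)

/-- Let the coalition play like `τc` away from `l` and like `τ` below `l`: then `σ` still wins
but never reaches `l ++ [s]`, so the coalition may do anything below `l ++ [s]`, while `σc` still
wins and does reach `l ++ [s]`. -/
lemma hasWinningStrategyFrom_of_stepProb_eq_zero (hΦ : MeasurableSet Φ) (hPr : G.ValidPr Pr)
    {l : List G.S} (hl : l ≠ []) {σ σc : G.Strategy p} {τ τc : G.CoStrategy p} {s : G.S}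
    (hdom : ∀ τ', G.Wins Pr st (G.combine σ τ') Φ → G.Wins Pr st (G.combine σc τ') Φ)
    (hw : G.Wins Pr st (G.combine σ τ) Φ) (hr : 0 < G.cylProb (G.combine σ τ) l)
    (hz : G.stepProb (G.lastS l) (G.moves (G.combine σ τ) l) s = 0)
    (hwc : G.Wins Pr st (G.combine σ τc) Φ) (hrc : 0 < G.cylProb (G.combine σc τc) l)
    (hsc : 0 < G.stepProb (G.lastS l) (Function.update (G.moves (G.combine σ τ) l) p (σc l).1) s) :
    HasWinningStrategyFrom Pr st Φ p (l ++ [s]) := by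
  set τ₃ := coGraft l τc τ
  have hK : ¬ l ++ [s] <+: l := fun h => by simpa using h.length_le
  have hz₃ : G.cylProb (G.combine σ τ₃) (l ++ [s]) = 0 := by
    rw [cylProb_append_singleton _ hl,
      moves_combine_congr rfl (coGraft_of_prefix τc τ (List.prefix_refl l)), hz, mul_zero]
  refine hasWinningStrategyFrom_of_forall_coGraft hΦ hPr (by simp) σc τ₃ fun η => ⟨hdom _ ?_, ?_⟩
  · refine (wins_congr_of_cylProb_eq_zero hΦ hPr (fun M hM => ?_) hz₃).1
      (wins_coGraft hΦ hPr hl σ hwc hw hr)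
    exact (moves_combine_congr rfl (coGraft_of_not_prefix _ _ hM)).symm
  · have hat : ∀ q hq, coGraft (l ++ [s]) τ₃ η q hq l = τ q hq l := fun q hq =>
      (coGraft_of_not_prefix _ _ hK q hq).trans (coGraft_of_prefix τc τ (List.prefix_refl l) q hq)
    have hbefore : ∀ M, M <+: l → M ≠ l → ∀ q hq, coGraft (l ++ [s]) τ₃ η q hq M = τc q hq M := by
      intro M hM hne q hq
      have hlM := not_prefix_of_prefix_of_ne hM hne
      exact (coGraft_of_not_prefix _ _ (fun h => hlM ((List.prefix_append l [s]).trans h)) q hq).trans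
        (coGraft_of_not_prefix τc τ hlM q hq)
    rw [cylProb_append_singleton _ hl, moves_combine_eq_update σ σc hat,
      cylProb_congr fun M hM hne => moves_combine_congr rfl (hbefore M hM hne)]
    exact mul_pos hrc hsc

lemma eq_of_append_singleton_prefix {l M : List G.S} {s₁ s₂ : G.S} (h₁ : l ++ [s₁] <+: M)
    (h₂ : l ++ [s₂] <+: M) : s₁ = s₂ := by
  rcases List.prefix_or_prefix_of_prefix h₁ h₂ with h | h
  · simpa using h.eq_of_length (by simp)
  · simpa using (h.eq_of_length (by simp)).symm

/-- Plays `γ` at `l`, `θ s` below every successor `l ++ [s]` with `s ∈ W`, and `σ` elsewhere. -/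
def merge (l : List G.S) (γ : G.Mixed p (G.lastS l)) (W : Set G.S) (θ : G.S → G.Strategy p)
    (σ : G.Strategy p) : G.Strategy p :=
  Strategy.update (fun M => if h : ∃ s ∈ W, l ++ [s] <+: M then θ h.choose M else σ M) l γ

section merge

variable {l M : List G.S} {γ : G.Mixed p (G.lastS l)} {W : Set G.S} {θ : G.S → G.Strategy p}
  {σ : G.Strategy p} {s : G.S}

lemma merge_self : merge l γ W θ σ l = γ :=
  Strategy.update_self ..

lemma merge_of_not_prefix (h : ¬ l <+: M) : merge l γ W θ σ M = σ M := by
  refine (Strategy.update_of_ne _ _ (by rintro rfl; exact h (List.prefix_refl _))).trans ?_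
  exact dif_neg fun ⟨_, _, hs⟩ => h ((List.prefix_append _ _).trans hs)

lemma merge_of_mem (hs : s ∈ W) (h : l ++ [s] <+: M) : merge l γ W θ σ M = θ s M := by
  have hex : ∃ s ∈ W, l ++ [s] <+: M := ⟨s, hs, h⟩
  refine (Strategy.update_of_ne _ _ (by rintro rfl; simpa using h.length_le)).trans ?_
  refine (dif_pos hex).trans ?_
  rw [eq_of_append_singleton_prefix hex.choose_spec.2 h]

lemma merge_of_not_mem (hs : s ∉ W) (h : l ++ [s] <+: M) : merge l γ W θ σ M = σ M := by
  refine (Strategy.update_of_ne _ _ (by rintro rfl; simpa using h.length_le)).trans ?_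
  exact dif_neg fun ⟨s', hs', h'⟩ => hs (eq_of_append_singleton_prefix h' h ▸ hs')

end merge

lemma wins_merge (hΦ : MeasurableSet Φ) (hPr : G.ValidPr Pr) {l : List G.S}
    {σ : G.Strategy p} {τ : G.CoStrategy p} (γ : G.Mixed p (G.lastS l)) {W : Set G.S}
    {θ : G.S → G.Strategy p}
    (hθ : ∀ s ∈ W, ∀ σ₀ τ₀,
      WinsOn Pr st (G.combine (graft (l ++ [s]) σ₀ (θ s)) τ₀) Φ (G.Cyl (l ++ [s])))
    (hw : G.Wins Pr st (G.combine σ τ) Φ)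
    (hreach : ∀ s ∉ W, 0 < G.cylProb (G.combine (merge l γ W θ σ) τ) (l ++ [s]) →
      0 < G.cylProb (G.combine σ τ) (l ++ [s])) :
    G.Wins Pr st (G.combine (merge l γ W θ σ) τ) Φ := by
  rw [wins_iff_winsOn hΦ hPr _ l] at hw ⊢
  refine ⟨(winsOn_compl_Cyl_congr hΦ hPr fun M hM =>
    moves_combine_congr (merge_of_not_prefix hM) fun _ _ => rfl).2 hw.1, fun s => ?_⟩
  by_cases hs : s ∈ W
  · have : merge l γ W θ σ = graft (l ++ [s]) (merge l γ W θ σ) (θ s) := funext fun M => by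
      by_cases hM : l ++ [s] <+: M
      · rw [graft_of_prefix _ _ hM, merge_of_mem hs hM]
      · rw [graft_of_not_prefix _ _ hM]
    rw [this]
    exact hθ s hs _ τ
  · exact winsOn_Cyl_of_agree hΦ hPr (by simp)
      (fun M hM => moves_combine_congr (merge_of_not_mem hs hM) fun _ _ => rfl) (hreach s hs)
      (hw.2 s)

lemma cylProb_pos_of_not_hasWinningStrategyFrom (hΦ : MeasurableSet Φ) (hPr : G.ValidPr Pr)
    {l : List G.S} (hl : l ≠ []) {σ : G.Strategy p} {τ : G.CoStrategy p}
    {γ : G.Mixed p (G.lastS l)} {W : Set G.S} {θ : G.S → G.Strategy p}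
    (hw : G.Wins Pr st (G.combine σ τ) Φ)
    (hγ : ∀ c ∈ G.Supp γ, ∃ (σc : G.Strategy p) (τc : G.CoStrategy p), (σc l).1 = Pi.single c 1 ∧
      (∀ τ', G.Wins Pr st (G.combine σ τ') Φ → G.Wins Pr st (G.combine σc τ') Φ) ∧
      G.Wins Pr st (G.combine σ τc) Φ ∧ 0 < G.cylProb (G.combine σc τc) l)
    {s : G.S} (hs : ¬ HasWinningStrategyFrom Pr st Φ p (l ++ [s]))
    (hp : 0 < G.cylProb (G.combine (merge l γ W θ σ) τ) (l ++ [s])) :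
    0 < G.cylProb (G.combine σ τ) (l ++ [s]) := by
  have hF : G.moves (G.combine (merge l γ W θ σ) τ) l =
      Function.update (G.moves (G.combine σ τ) l) p γ.1 := by
    rw [moves_combine_eq_update σ _ fun _ _ => rfl, merge_self]
  rw [cylProb_append_singleton _ hl, cylProb_congr fun M hM hne => moves_combine_congr
    (merge_of_not_prefix (not_prefix_of_prefix_of_ne hM hne)) fun _ _ => rfl] at hp
  rw [cylProb_append_singleton _ hl]
  have hr := pos_of_mul_pos_left hp (stepProb_nonneg _ (moves_nonneg _ _) _)
  refine mul_pos hr ((stepProb_nonneg _ (moves_nonneg _ _) _).lt_of_ne' fun hz => hs ?_)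
  obtain ⟨c, hc, hsc⟩ := (stepProb_pos_iff p _ (moves_nonneg _ _) s).1
    (pos_of_mul_pos_right hp (cylProb_nonneg _ _))
  rw [hF, Function.update_self] at hc
  rw [hF, Function.update_idem] at hsc
  obtain ⟨σc, τc, hσc, hdom, hwc, hrc⟩ := hγ c hc
  exact hasWinningStrategyFrom_of_stepProb_eq_zero hΦ hPr hl hdom hw hr hz hwc hrc (by rwa [hσc])

lemma exists_wdom_of_forall_dirac (hwin : MeasurableSet (win p)) (hPr : G.ValidPr Pr)
    {l : List G.S} (hl : l ≠ []) (σ : G.Strategy p) (γ : G.Mixed p (G.lastS l))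
    (h : ∀ a (ha : a ∈ G.Supp γ), ∃ σa : G.Strategy p,
      σa l = G.dirac p (G.lastS l) a (γ.2.2.2 a ha) ∧ G.WDom Pr win st σ σa) :
    ∃ σ' : G.Strategy p, σ' l = γ ∧ G.WDom Pr win st σ σ' := by
  by_cases hA : ∃ a, ∃ ha : a ∈ G.Supp γ, ∃ σa : G.Strategy p,
      σa l = G.dirac p (G.lastS l) a (γ.2.2.2 a ha) ∧ G.WDom Pr win st σ σa ∧
      ∀ τ, G.Wins Pr st (G.combine σ τ) (win p) → G.cylProb (G.combine σa τ) l = 0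
  · obtain ⟨a, ha, σa, -, hdom, hzero⟩ := hA
    exact ⟨σa.update l γ, σa.update_self l γ, fun τ hw =>
      (wins_combine_update_iff_of_cylProb_eq_zero hwin hPr (hzero τ hw) γ).2 (hdom τ hw)⟩
  push Not at hA
  have hγ : ∀ c ∈ G.Supp γ, ∃ (σc : G.Strategy p) (τc : G.CoStrategy p),
      (σc l).1 = Pi.single c 1 ∧ G.WDom Pr win st σ σc ∧
      G.Wins Pr st (G.combine σ τc) (win p) ∧ 0 < G.cylProb (G.combine σc τc) l := by
    intro c hc
    obtain ⟨σc, hσc, hdom⟩ := h c hc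
    obtain ⟨τc, hwc, hrc⟩ := hA c hc σc hσc hdom
    exact ⟨σc, τc, by rw [hσc, dirac_val], hdom, hwc, (cylProb_nonneg _ _).lt_of_ne' hrc⟩
  have : ∀ s, ∃ θ : G.Strategy p, HasWinningStrategyFrom Pr st (win p) p (l ++ [s]) →
      ∀ σ₀ τ₀, WinsOn Pr st (G.combine (graft (l ++ [s]) σ₀ θ) τ₀) (win p) (G.Cyl (l ++ [s])) :=
    fun s => (em (HasWinningStrategyFrom Pr st (win p) p (l ++ [s]))).elim
      (fun ⟨θ, hθ⟩ => ⟨θ, fun _ => hθ⟩) fun hs => ⟨σ, fun h => absurd h hs⟩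
  choose θ hθ using this
  exact ⟨merge l γ {s | HasWinningStrategyFrom Pr st (win p) p (l ++ [s])} θ σ, merge_self,
    fun τ hw => wins_merge hwin hPr γ hθ hw fun _ hs =>
      cylProb_pos_of_not_hasWinningStrategyFrom hwin hPr hl hw hγ hs⟩

lemma mWDom_of_forall_dirac (hwin : MeasurableSet (win p)) (hPr : G.ValidPr Pr) {l : List G.S}
    {β γ : G.Mixed p (G.lastS l)}
    (h : ∀ b (hb : b ∈ G.Supp γ), G.MWDom Pr win st l β (G.dirac p (G.lastS l) b (γ.2.2.2 b hb))) :
    G.MWDom Pr win st l β γ := fun σ hσ hσl =>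
  exists_wdom_of_forall_dirac hwin hPr (isHistory_of_mem_histOfS hσ).ne_nil σ γ
    fun b hb => h b hb σ hσ hσl

lemma mAdmissible_iff {l : List G.S} {β : G.Mixed p (G.lastS l)} :
    G.MAdmissible Pr win st l β ↔ ∀ β', G.MWDom Pr win st l β β' → G.MWDom Pr win st l β' β := by
  simp only [MAdmissible, MSDom, not_and, not_not]

@[simp] lemma supp_dirac {s : G.S} {a : G.A} (ha : a ∈ G.act p s) : G.Supp (G.dirac p s a ha) = {a} := by
  ext b
  simp [Supp, dirac_val, Pi.single_apply]

end ConcGame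

theorem stmt3_general (G : ConcGame) (win : G.P → Set G.Run)
    (hwin : ∀ p, MeasurableSet (win p))
    (Pr : G.Profile → Measure G.Run) (hPr : G.ValidPr Pr)
    (st : ConcGame.Sem) (p : G.P) (l : List G.S)
    (α : G.Mixed p (G.lastS l)) :
    G.MAdmissible Pr win st l α ↔
      ∀ (a : G.A) (ha : a ∈ G.Supp α),
        G.MAdmissible Pr win st l (G.dirac p (G.lastS l) a (α.2.2.2 a ha)) ∧
        ∀ (b : G.A) (hb : b ∈ G.Supp α),
          G.MEquiv Pr win st l (G.dirac p (G.lastS l) a (α.2.2.2 a ha))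
            (G.dirac p (G.lastS l) b (α.2.2.2 b hb)) := by
  have trans : ∀ {β γ ζ : G.Mixed p (G.lastS l)}, G.MWDom Pr win st l β γ →
      G.MWDom Pr win st l γ ζ → G.MWDom Pr win st l β ζ :=
    ConcGame.mWDom_trans (hwin p) hPr
  have toDirac : ∀ a (ha : a ∈ G.Supp α),
      G.MWDom Pr win st l α (G.dirac p (G.lastS l) a (α.2.2.2 a ha)) := fun a ha =>
    ConcGame.mWDom_of_supp_subset (hwin p) hPr (by simpa using ha)
  simp only [ConcGame.mAdmissible_iff]
  constructor
  · intro hadm a ha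
    have fromDirac := fun b hb => hadm _ (toDirac b hb)
    exact ⟨fun β' h => trans (hadm β' (trans (toDirac a ha) h)) (toDirac a ha),
      fun b hb => ⟨trans (fromDirac a ha) (toDirac b hb), trans (fromDirac b hb) (toDirac a ha)⟩⟩
  · intro h β' hβ'
    obtain ⟨a, ha⟩ := ConcGame.supp_nonempty α
    have fromDirac := ConcGame.mWDom_of_forall_dirac (hwin p) hPr fun b hb => ((h a ha).2 b hb).1
    exact ConcGame.mWDom_of_forall_dirac (hwin p) hPr fun b hb =>
      trans ((h a ha).1 β' (trans fromDirac hβ')) ((h a ha).2 b hb).1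

/-- a move is admissible at `l` iff all Dirac moves in its support are
admissible at `l` and equivalent to each other at `l`. -/
theorem stmt3 (G : ConcGame) (win : G.P → Set G.Run)
    (hwin : ∀ p, MeasurableSet (win p))
    (Pr : G.Profile → Measure G.Run) (hPr : G.ValidPr Pr)
    (st : ConcGame.Sem) (p : G.P) (l : List G.S) (hl : G.IsHistory l)
    (α : G.Mixed p (G.lastS l)) :
    G.MAdmissible Pr win st l α ↔
      ∀ (a : G.A) (ha : a ∈ G.Supp α),
        G.MAdmissible Pr win st l (G.dirac p (G.lastS l) a (α.2.2.2 a ha)) ∧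
        ∀ (b : G.A) (hb : b ∈ G.Supp α),
          G.MEquiv Pr win st l (G.dirac p (G.lastS l) a (α.2.2.2 a ha))
            (G.dirac p (G.lastS l) b (α.2.2.2 b hb)) :=
  stmt3_general G win hwin Pr hPr st p l α
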